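/- arXiv:1104.2533 — 5 statements merged into one kernel-verified Lean document; each statement's English description precedes it below -/
import Mathlib

section
/- Let $n \geq 2$ and let $U$ be the set of points of $\mathbb{D}^n$ on which all solutions of the Nevanlinna-Pick problem with nodes $(0,\dots,0), (1/2,\dots,1/2)$ and targets $0, 1/2$ agree. Then $U = \{(z,\dots,z) : z \in \mathbb{D}\}$. -/
/-- The open unit polydisc in `ℂⁿ`. -/
def polydisc (n : ℕ) : Set (Fin n → ℂ) := {z | ∀ i, ‖z i‖ < 1}

/-- A solution of the Nevanlinna–Pick problem with nodes `(0,…,0), (1/2,…,1/2)` and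
targets `0, 1/2`. -/
def IsSolution (n : ℕ) (F : (Fin n → ℂ) → ℂ) : Prop :=
  DifferentiableOn ℂ F (polydisc n) ∧ (∀ z ∈ polydisc n, ‖F z‖ ≤ 1) ∧
    F (fun _ => 0) = 0 ∧ F (fun _ => (1 : ℂ) / 2) = 1 / 2

/-!
Coordinate projections are solutions, so on a point of `U` all coordinates agree. Conversely,
the restriction of a solution to the diagonal is a self-map of the disc fixing `0` and `1/2`,
hence the identity by the equality case of the Schwarz lemma.
-/

open Metric Set

theorem Complex.eqOn_id_of_mapsTo_ball_of_apply_eq_self {f : ℂ → ℂ} {R : ℝ} {a : ℂ}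
    (hd : DifferentiableOn ℂ f (ball 0 R)) (h_maps : MapsTo f (ball 0 R) (closedBall 0 R))
    (h₀ : f 0 = 0) (ha : a ∈ ball 0 R) (ha₀ : a ≠ 0) (hfa : f a = a) :
    EqOn f id (ball 0 R) := by
  have hR : 0 < R := nonempty_ball.mp ⟨a, ha⟩
  have hslope : dslope f 0 a = 1 := by
    rw [dslope_of_ne _ ha₀, slope_def_field, hfa, h₀, sub_zero, div_self ha₀]
  intro z hz
  simpa [h₀, hslope] using Complex.affine_of_mapsTo_ball_of_norm_dslope_eq_div hd
    (by rwa [h₀]) ha (by rw [hslope, norm_one, div_self hR.ne']) hz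

theorem IsSolution.apply_const {n : ℕ} {F : (Fin n → ℂ) → ℂ} (hF : IsSolution n F) {z : ℂ}
    (hz : ‖z‖ < 1) : F (fun _ => z) = z := by
  obtain ⟨hd, hbound, h₀, h_half⟩ := hF
  have hdiag : MapsTo (fun (w : ℂ) (_ : Fin n) => w) (ball 0 1) (polydisc n) :=
    fun w hw _ => mem_ball_zero_iff.mp hw
  exact Complex.eqOn_id_of_mapsTo_ball_of_apply_eq_self (f := fun w => F fun _ => w) (a := 1 / 2)
    (hd.comp (by fun_prop : Differentiable ℂ fun (w : ℂ) (_ : Fin n) => w).differentiableOn hdiag)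
    (fun w hw => mem_closedBall_zero_iff.mpr (hbound _ (hdiag hw))) h₀ (by norm_num)
    (by norm_num) h_half (mem_ball_zero_iff.mpr hz)

theorem isSolution_eval {n : ℕ} (i : Fin n) : IsSolution n fun w => w i :=
  ⟨differentiableOn_apply i _, fun _ hw => (hw i).le, rfl, rfl⟩

theorem stmt1_general (n : ℕ) :
    {w ∈ polydisc n | ∀ F G : (Fin n → ℂ) → ℂ, IsSolution n F → IsSolution n G → F w = G w}
      = {w : Fin n → ℂ | ∃ z : ℂ, ‖z‖ < 1 ∧ w = fun _ => z} := by
  ext w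
  constructor
  · rintro ⟨hw, hagree⟩
    rcases isEmpty_or_nonempty (Fin n) with _ | ⟨⟨i⟩⟩
    · exact ⟨0, by simp, Subsingleton.elim _ _⟩
    · exact ⟨w i, hw i, funext fun j => hagree _ _ (isSolution_eval j) (isSolution_eval i)⟩
  · rintro ⟨z, hz, rfl⟩
    exact ⟨fun _ => hz, fun F G hF hG => by rw [hF.apply_const hz, hG.apply_const hz]⟩

theorem stmt1 (n : ℕ) (hn : 2 ≤ n) :
    {w ∈ polydisc n | ∀ F G : (Fin n → ℂ) → ℂ, IsSolution n F → IsSolution n G → F w = G w}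
      = {w : Fin n → ℂ | ∃ z : ℂ, ‖z‖ < 1 ∧ w = fun _ => z} :=
  stmt1_general n
end

section
/- Let $H$ be a Hilbert function space on $X$, let $\phi$ be a multiplier with $\|M_\phi\|\le 1$, let $\lambda_1,\dots,\lambda_N\in X$, $\omega_i=\phi(\lambda_i)$, and suppose $\gamma\in\mathbb{C}^N$ is a nonzero vector in the null space of the Pick matrix $[(1-\omega_i\overline{\omega_j})\langle k_{\lambda_j},k_{\lambda_i}\rangle]$. Then for every $\lambda \in X$, $\sum_{j=1}^N (1 - \overline{\omega_j}\,\phi(\lambda))\,\gamma_j\, k_{\lambda_j}(\lambda) = 0$. In particular, if $G(\lambda) = \sum_{j=1}^N \gamma_j k_{\lambda_j}(\lambda) \neq 0$, then $\phi(\lambda) = \big(\sum_j \gamma_j k_{\lambda_j}(\lambda)\big) / \big(\sum_j \overline{\omega_j}\,\gamma_j\, k_{\lambda_j}(\lambda)\big)$ is uniquely determined by the data. -/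
open scoped InnerProductSpace

/-- If `γ ≠ 0` lies in the null space of the Pick matrix of a contractive multiplier `φ`, then
`∑_j (1 - conj(ω_j) φ(λ)) γ_j k_{λ_j}(λ) = 0` for every `λ ∈ X`; in particular, where
`G(λ) = ∑_j γ_j k_{λ_j}(λ) ≠ 0`, the value `φ(λ)` is given by the explicit quotient. -/
theorem stmt4 {X : Type*} {H : Type*} [NormedAddCommGroup H] [InnerProductSpace ℂ H]
    [CompleteSpace H]
    (j : H →ₗ[ℂ] (X → ℂ)) (hj : Function.Injective j)
    (k : X → H) (hk : ∀ (f : H) (lam : X), ⟪k lam, f⟫_ℂ = j f lam)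
    (phi : X → ℂ) (M : H →L[ℂ] H)
    (hM : ∀ (f : H) (x : X), j (M f) x = phi x * j f x)
    (hnorm : ‖M‖ ≤ 1)
    (N : ℕ) (lam : Fin N → X) (omega : Fin N → ℂ) (homega : ∀ i, omega i = phi (lam i))
    (gamma : Fin N → ℂ) (hgamma : gamma ≠ 0)
    (hnull : (Matrix.of fun i j' : Fin N =>
        (1 - omega i * (starRingEnd ℂ) (omega j')) * ⟪k (lam i), k (lam j')⟫_ℂ).mulVec
        gamma = 0) :
    ∀ lam' : X,
      (∑ i : Fin N, (1 - (starRingEnd ℂ) (omega i) * phi lam') * gamma i * j (k (lam i)) lam'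
          = 0) ∧
      (∑ i : Fin N, gamma i * j (k (lam i)) lam' ≠ 0 →
        phi lam' = (∑ i : Fin N, gamma i * j (k (lam i)) lam') /
          (∑ i : Fin N, (starRingEnd ℂ) (omega i) * gamma i * j (k (lam i)) lam')) := by
  classical
  set T := ContinuousLinearMap.adjoint M with hTdef
  have hTnorm : ‖T‖ = ‖M‖ := ContinuousLinearMap.adjoint.norm_map M
  have hT : ∀ g : H, ‖T g‖ ≤ ‖g‖ := by
    intro g
    calc ‖T g‖ ≤ ‖T‖ * ‖g‖ := T.le_opNorm g
    _ ≤ 1 * ‖g‖ := by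
        apply mul_le_mul_of_nonneg_right _ (norm_nonneg g)
        rw [hTnorm]; exact hnorm
    _ = ‖g‖ := one_mul _
  have hTk : ∀ x : X, T (k x) = (starRingEnd ℂ) (phi x) • k x := by
    intro x
    apply ext_inner_right ℂ
    intro f
    rw [hTdef, ContinuousLinearMap.adjoint_inner_left, hk, hM, inner_smul_left]
    simp [hk]
  -- the vector u = ∑ γᵢ kᵢ
  set u : H := ∑ i, gamma i • k (lam i) with hu
  have hTu : T u = ∑ i, (gamma i * (starRingEnd ℂ) (omega i)) • k (lam i) := by
    rw [hu, map_sum]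
    refine Finset.sum_congr rfl fun i _ => ?_
    rw [map_smul, hTk, homega, smul_smul]
  have key : ∀ c d : Fin N → ℂ,
      ⟪∑ i, c i • k (lam i), ∑ i', d i' • k (lam i')⟫_ℂ =
        ∑ i, ∑ i', (starRingEnd ℂ) (c i) * d i' * ⟪k (lam i), k (lam i')⟫_ℂ := by
    intro c d
    rw [sum_inner]
    refine Finset.sum_congr rfl fun i _ => ?_
    rw [inner_sum]
    refine Finset.sum_congr rfl fun i' _ => ?_
    rw [inner_smul_left, inner_smul_right]; ring
  have hnull' : ∀ i, ∑ i', (1 - omega i * (starRingEnd ℂ) (omega i')) *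
      ⟪k (lam i), k (lam i')⟫_ℂ * gamma i' = 0 := by
    intro i
    have := congrFun hnull i
    simpa [Matrix.mulVec, dotProduct] using this
  have hQuu : ⟪u, u⟫_ℂ - ⟪T u, T u⟫_ℂ = 0 := by
    rw [hTu, hu, key, key, ← Finset.sum_sub_distrib]
    have : ∀ i ∈ Finset.univ, (∑ i', (starRingEnd ℂ) (gamma i) * gamma i' *
          ⟪k (lam i), k (lam i')⟫_ℂ) -
        (∑ i', (starRingEnd ℂ) (gamma i * (starRingEnd ℂ) (omega i)) *
          (gamma i' * (starRingEnd ℂ) (omega i')) * ⟪k (lam i), k (lam i')⟫_ℂ) =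
        (starRingEnd ℂ) (gamma i) *
          ∑ i', (1 - omega i * (starRingEnd ℂ) (omega i')) *
            ⟪k (lam i), k (lam i')⟫_ℂ * gamma i' := by
      intro i _
      rw [← Finset.sum_sub_distrib, Finset.mul_sum]
      refine Finset.sum_congr rfl fun i' _ => ?_
      simp only [map_mul, Complex.conj_conj]
      ring
    rw [Finset.sum_congr rfl this]
    simp [hnull']
  intro lam'
  set v : H := k lam' with hv
  have hTv : T v = (starRingEnd ℂ) (phi lam') • v := hTk lam'
  have hre : ∀ g : H, (⟪g, g⟫_ℂ).re = ‖g‖ ^ 2 := fun g => inner_self_eq_norm_sq (𝕜 := ℂ) g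
  have hQpos : ∀ g : H, 0 ≤ (⟪g, g⟫_ℂ - ⟪T g, T g⟫_ℂ).re := by
    intro g
    rw [Complex.sub_re, hre, hre]
    have := hT g
    nlinarith [norm_nonneg g, norm_nonneg (T g)]
  set b : ℂ := ⟪v, u⟫_ℂ - ⟪T v, T u⟫_ℂ with hb
  set c : ℝ := (⟪v, v⟫_ℂ - ⟪T v, T v⟫_ℂ).re with hc
  have hc0 : 0 ≤ c := hQpos v
  have hvv : ⟪v, v⟫_ℂ - ⟪T v, T v⟫_ℂ = (c : ℂ) := by
    rw [hc, Complex.sub_re, hre, hre, inner_self_eq_norm_sq_to_K (𝕜 := ℂ),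
      inner_self_eq_norm_sq_to_K (𝕜 := ℂ)]
    norm_num
  have hb0 : b = 0 := by
    by_contra hbne
    set B : ℝ := Complex.normSq b with hB
    have hBpos : 0 < B := Complex.normSq_pos.mpr hbne
    set r : ℝ := 1 / (c + 1) with hr
    have hcp : (0 : ℝ) < c + 1 := by linarith
    have hr1 : r * (c + 1) = 1 := by rw [hr]; field_simp
    set z : ℂ := -(r : ℂ) * b with hz
    have hb' : ⟪u, v⟫_ℂ - ⟪T u, T v⟫_ℂ = (starRingEnd ℂ) b := by
      rw [hb, map_sub, inner_conj_symm, inner_conj_symm]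
    have hm : b * (starRingEnd ℂ) b = (B : ℂ) := by rw [hB]; exact_mod_cast Complex.mul_conj b
    have hexp : ⟪u + z • v, u + z • v⟫_ℂ - ⟪T (u + z • v), T (u + z • v)⟫_ℂ =
        ((-2 * r * B + r ^ 2 * B * c : ℝ) : ℂ) := by
      calc ⟪u + z • v, u + z • v⟫_ℂ - ⟪T (u + z • v), T (u + z • v)⟫_ℂ
          = (⟪u, u⟫_ℂ - ⟪T u, T u⟫_ℂ) + (starRingEnd ℂ) z * (⟪v, u⟫_ℂ - ⟪T v, T u⟫_ℂ)
            + z * (⟪u, v⟫_ℂ - ⟪T u, T v⟫_ℂ)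
            + (starRingEnd ℂ) z * z * (⟪v, v⟫_ℂ - ⟪T v, T v⟫_ℂ) := by
            rw [map_add, map_smul]
            simp only [inner_add_left, inner_add_right, inner_smul_left, inner_smul_right]
            ring
        _ = 0 + (starRingEnd ℂ) z * b + z * (starRingEnd ℂ) b
            + (starRingEnd ℂ) z * z * (c : ℂ) := by
            rw [hQuu, ← hb, hb', hvv]
        _ = ((-2 * r * B + r ^ 2 * B * c : ℝ) : ℂ) := by
            rw [hz]
            simp only [map_mul, map_neg, Complex.conj_ofReal]
            push_cast
            linear_combination (-2 * (r : ℂ) + (r : ℂ) ^ 2 * (c : ℂ)) * hm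
    have hineq := hQpos (u + z • v)
    rw [hexp, Complex.ofReal_re] at hineq
    have e : (-2 * r * B + r ^ 2 * B * c) * (c + 1) ^ 2 = -2 * (c + 1) * B + B * c := by
      linear_combination (-2 * B * (c + 1) + B * c * (r * (c + 1) + 1)) * hr1
    have h2 : (0 : ℝ) ≤ -2 * (c + 1) * B + B * c := by
      rw [← e]; exact mul_nonneg hineq (sq_nonneg _)
    nlinarith [hBpos, hc0, h2]
  -- translate b = 0 into the goal sum
  have hsum : ∑ i : Fin N, (1 - (starRingEnd ℂ) (omega i) * phi lam') * gamma i *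
      j (k (lam i)) lam' = b := by
    rw [hb, hTu, hTv, hu]
    rw [inner_sum, inner_smul_left, inner_sum, Finset.mul_sum, ← Finset.sum_sub_distrib]
    refine Finset.sum_congr rfl fun i _ => ?_
    rw [inner_smul_right, inner_smul_right, ← hk, hv]
    simp only [map_mul, Complex.conj_conj]
    ring
  have hmain : ∑ i : Fin N, (1 - (starRingEnd ℂ) (omega i) * phi lam') * gamma i *
      j (k (lam i)) lam' = 0 := by rw [hsum, hb0]
  refine ⟨hmain, fun hS => ?_⟩
  have hsplit : ∑ i : Fin N, gamma i * j (k (lam i)) lam' =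
      phi lam' * ∑ i : Fin N, (starRingEnd ℂ) (omega i) * gamma i * j (k (lam i)) lam' := by
    have := hmain
    rw [Finset.mul_sum, ← sub_eq_zero, ← Finset.sum_sub_distrib]
    rw [← this]
    refine Finset.sum_congr rfl fun i _ => ?_
    ring
  have hT' : ∑ i : Fin N, (starRingEnd ℂ) (omega i) * gamma i * j (k (lam i)) lam' ≠ 0 := by
    intro h0
    rw [h0, mul_zero] at hsplit
    exact hS hsplit
  rw [hsplit]
  field_simp
end

section
/- Let $H$ be a Hilbert function space, $F$ a multiplier such that $M_F$ is an isometry with $\dim\ker(M_F^*) = d < \infty$. Let $\lambda_1,\dots,\lambda_N$ be points with kernels $k_{\lambda_i}$ and $\omega_i = F(\lambda_i)$. Then the Pick matrix $[(1-\omega_i\overline{\omega_j})\langle k_{\lambda_j},k_{\lambda_i}\rangle]$ has rank at most $d$. In particular, if $N > d$ the Pick matrix is singular. -/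
open scoped InnerProductSpace

/-! By the reproducing property each kernel function `k_λ` is an eigenvector of `M_F^*` with
eigenvalue `\overline{F(λ)}`. As `M_F` is an isometry, `I - M_F M_F^*` is the orthogonal projection
onto `ker M_F^*`, and the Pick matrix is the Gram matrix of the `N` vectors
`(I - M_F M_F^*) k_{λ_i}` of this `d`-dimensional space. -/

namespace Matrix

variable {𝕜 E n : Type*} [RCLike 𝕜] [NormedAddCommGroup E] [InnerProductSpace 𝕜 E]
  [FiniteDimensional 𝕜 E] [Fintype n]

theorem rank_gram_le_finrank (v : n → E) : (gram 𝕜 v).rank ≤ Module.finrank 𝕜 E := by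
  rw [gram_eq_conjTranspose_mul (stdOrthonormalBasis 𝕜 E)]
  exact (rank_mul_le_right _ _).trans ((rank_le_card_height _).trans_eq (Fintype.card_fin _))

theorem det_gram_eq_zero_of_finrank_lt [DecidableEq n] (v : n → E)
    (h : Module.finrank 𝕜 E < Fintype.card n) : (gram 𝕜 v).det = 0 := by
  by_contra hdet
  exact h.not_ge (det_gram_ne_zero_iff_linearIndependent.mp hdet).fintype_card_le_finrank

end Matrix

namespace ContinuousLinearMap

variable {𝕜 E F : Type*} [RCLike 𝕜] [NormedAddCommGroup E] [InnerProductSpace 𝕜 E]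
  [CompleteSpace E] [NormedAddCommGroup F] [InnerProductSpace 𝕜 F] [CompleteSpace F]

theorem adjoint_apply_eq_conj_smul {T : E →L[𝕜] E} {v : E} {c : 𝕜}
    (h : ∀ f, ⟪v, T f⟫_𝕜 = c * ⟪v, f⟫_𝕜) : adjoint T v = starRingEnd 𝕜 c • v :=
  ext_inner_right 𝕜 fun f => by rw [adjoint_inner_left, h, inner_smul_left, RCLike.conj_conj]

variable {T : E →L[𝕜] F} (hT : adjoint T ∘L T = 1)
include hT

theorem adjoint_apply_sub_apply_adjoint_apply (u : F) : adjoint T (u - T (adjoint T u)) = 0 := by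
  rw [map_sub, ← comp_apply (adjoint T) T, hT]
  exact sub_self _

theorem inner_sub_apply_adjoint_apply (u w : F) :
    ⟪u - T (adjoint T u), w - T (adjoint T w)⟫_𝕜 = ⟪u, w⟫_𝕜 - ⟪adjoint T u, adjoint T w⟫_𝕜 := by
  have hisom := (inner_map_map_iff_adjoint_comp_self T).mpr hT
  rw [inner_sub_left, inner_sub_right, inner_sub_right, hisom,
    ← adjoint_inner_left T (adjoint T w) u, ← adjoint_inner_right T (adjoint T u) w]
  ring

end ContinuousLinearMap

open ContinuousLinearMap in
theorem stmt8_general {X : Type*} {H : Type*} [NormedAddCommGroup H] [InnerProductSpace ℂ H]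
    [CompleteSpace H]
    (j : H →ₗ[ℂ] (X → ℂ))
    (k : X → H) (hk : ∀ (f : H) (lam : X), ⟪k lam, f⟫_ℂ = j f lam)
    (F : X → ℂ) (M : H →L[ℂ] H)
    (hM : ∀ (f : H) (x : X), j (M f) x = F x * j f x)
    (hiso : ∀ x, ‖M x‖ = ‖x‖)
    (d : ℕ)
    (hfin : FiniteDimensional ℂ (LinearMap.ker (ContinuousLinearMap.adjoint M : H →ₗ[ℂ] H)))
    (hd : Module.finrank ℂ (LinearMap.ker (ContinuousLinearMap.adjoint M : H →ₗ[ℂ] H)) = d)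
    (N : ℕ) (lam : Fin N → X) (omega : Fin N → ℂ) (homega : ∀ i, omega i = F (lam i)) :
    (Matrix.of fun i j' : Fin N =>
        (1 - omega i * (starRingEnd ℂ) (omega j')) * ⟪k (lam i), k (lam j')⟫_ℂ).rank ≤ d ∧
    (d < N →
      (Matrix.of fun i j' : Fin N =>
        (1 - omega i * (starRingEnd ℂ) (omega j')) * ⟪k (lam i), k (lam j')⟫_ℂ).det = 0) := by
  have hMM : adjoint M ∘L M = 1 := (norm_map_iff_adjoint_comp_self M).mp hiso
  have hMk (i : Fin N) : adjoint M (k (lam i)) = starRingEnd ℂ (omega i) • k (lam i) :=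
    adjoint_apply_eq_conj_smul fun f => by rw [hk, hk, hM, homega]
  let v (i : Fin N) : LinearMap.ker (adjoint M : H →ₗ[ℂ] H) :=
    ⟨k (lam i) - M (adjoint M (k (lam i))), adjoint_apply_sub_apply_adjoint_apply hMM _⟩
  have hpick : (Matrix.of fun i j' : Fin N =>
      (1 - omega i * (starRingEnd ℂ) (omega j')) * ⟪k (lam i), k (lam j')⟫_ℂ) =
      Matrix.gram ℂ v := by
    ext i i'
    rw [Matrix.gram_apply, Submodule.coe_inner, inner_sub_apply_adjoint_apply hMM, hMk, hMk,
      inner_smul_left, inner_smul_right, RCLike.conj_conj, Matrix.of_apply]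
    ring
  rw [hpick, ← hd]
  exact ⟨Matrix.rank_gram_le_finrank v,
    fun hN => Matrix.det_gram_eq_zero_of_finrank_lt v (by rwa [Fintype.card_fin])⟩

/-- If `F` is a multiplier of a Hilbert function space whose multiplication operator is an
isometry with `dim ker M_F* = d < ∞`, then every Pick matrix built from points
`λ₁,…,λ_N` and targets `ω_i = F(λ_i)` has rank at most `d`; in particular it is singular
whenever `N > d`. -/
theorem stmt8 {X : Type*} {H : Type*} [NormedAddCommGroup H] [InnerProductSpace ℂ H]
    [CompleteSpace H]
    (j : H →ₗ[ℂ] (X → ℂ)) (hj : Function.Injective j)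
    (k : X → H) (hk : ∀ (f : H) (lam : X), ⟪k lam, f⟫_ℂ = j f lam)
    (F : X → ℂ) (M : H →L[ℂ] H)
    (hM : ∀ (f : H) (x : X), j (M f) x = F x * j f x)
    (hiso : ∀ x, ‖M x‖ = ‖x‖)
    (d : ℕ)
    (hfin : FiniteDimensional ℂ (LinearMap.ker (ContinuousLinearMap.adjoint M : H →ₗ[ℂ] H)))
    (hd : Module.finrank ℂ (LinearMap.ker (ContinuousLinearMap.adjoint M : H →ₗ[ℂ] H)) = d)
    (N : ℕ) (lam : Fin N → X) (omega : Fin N → ℂ) (homega : ∀ i, omega i = F (lam i)) :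
    (Matrix.of fun i j' : Fin N =>
        (1 - omega i * (starRingEnd ℂ) (omega j')) * ⟪k (lam i), k (lam j')⟫_ℂ).rank ≤ d ∧
    (d < N →
      (Matrix.of fun i j' : Fin N =>
        (1 - omega i * (starRingEnd ℂ) (omega j')) * ⟪k (lam i), k (lam j')⟫_ℂ).det = 0) :=
  stmt8_general j k hk F M hM hiso d hfin hd N lam omega homega
end

section
/- Let $p(z,w) = z^3 - w^2$. Then its reflection with respect to multidegree $(3,2)$ satisfies $\widetilde{p}(z,w) = w^2 - z^3 = -p(z,w)$. Consequently, for $0 < \epsilon < 1/2$, the rational function $F_\epsilon(z,w) = \dfrac{z^3 w^2 - \epsilon(z^3 - w^2)}{1 + \epsilon(z^3 - w^2)}$ satisfies $|F_\epsilon(\tau_1,\tau_2)| = 1$ for all $(\tau_1,\tau_2) \in \mathbb{T}^2$, its denominator does not vanish on $\overline{\mathbb{D}^2}$, and $F_\epsilon = z^3w^2$ on the Neil parabola $\{z^3 = w^2\}$, while $F_\epsilon \neq z^3 w^2$ at every point of $\mathbb{D}^2$ off the Neil parabola where $z^3w^2 \neq -1$. -/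
/-- For `p(z,w) = z³ - w²`, the reflection with respect to multidegree `(3,2)` is
`p̃ = w² - z³ = -p`; consequently for `0 < ε < 1/2` the rational function
`F_ε = (z³w² - ε(z³-w²)) / (1 + ε(z³-w²))` is unimodular on the 2-torus, its denominator
is zero-free on the closed bidisc, it agrees with `z³w²` on the Neil parabola `{z³ = w²}`,
and it differs from `z³w²` at every point of the open bidisc off the Neil parabola where
`z³w² ≠ -1`. -/
theorem stmt13 :
    (∀ z w : ℂ, z ≠ 0 → w ≠ 0 →
      z ^ 3 * w ^ 2 *
          (starRingEnd ℂ) (((starRingEnd ℂ) z)⁻¹ ^ 3 - ((starRingEnd ℂ) w)⁻¹ ^ 2)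
        = w ^ 2 - z ^ 3) ∧
    (∀ eps : ℝ, 0 < eps → eps < 1 / 2 →
      (∀ τ₁ τ₂ : ℂ, ‖τ₁‖ = 1 → ‖τ₂‖ = 1 →
        ‖(τ₁ ^ 3 * τ₂ ^ 2 - (eps : ℂ) * (τ₁ ^ 3 - τ₂ ^ 2)) /
            (1 + (eps : ℂ) * (τ₁ ^ 3 - τ₂ ^ 2))‖ = 1) ∧
      (∀ z w : ℂ, ‖z‖ ≤ 1 → ‖w‖ ≤ 1 → 1 + (eps : ℂ) * (z ^ 3 - w ^ 2) ≠ 0) ∧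
      (∀ z w : ℂ, z ^ 3 = w ^ 2 →
        (z ^ 3 * w ^ 2 - (eps : ℂ) * (z ^ 3 - w ^ 2)) /
            (1 + (eps : ℂ) * (z ^ 3 - w ^ 2)) = z ^ 3 * w ^ 2) ∧
      (∀ z w : ℂ, ‖z‖ < 1 → ‖w‖ < 1 → z ^ 3 ≠ w ^ 2 → z ^ 3 * w ^ 2 ≠ -1 →
        (z ^ 3 * w ^ 2 - (eps : ℂ) * (z ^ 3 - w ^ 2)) /
            (1 + (eps : ℂ) * (z ^ 3 - w ^ 2)) ≠ z ^ 3 * w ^ 2)) := by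
  constructor
  · intro z w hz hw
    simp only [map_sub, map_pow, map_inv₀, Complex.conj_conj]
    field_simp
  · intro eps heps heps2
    have hden : ∀ z w : ℂ, ‖z‖ ≤ 1 → ‖w‖ ≤ 1 →
        1 + (eps : ℂ) * (z ^ 3 - w ^ 2) ≠ 0 := by
      intro z w hz hw h
      have hx : (eps : ℂ) * (z ^ 3 - w ^ 2) = -1 := by linear_combination h
      have h2 : ‖(eps : ℂ) * (z ^ 3 - w ^ 2)‖ < 1 := by
        rw [norm_mul, Complex.norm_real, Real.norm_eq_abs]
        have hs : ‖z ^ 3 - w ^ 2‖ ≤ 2 := by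
          calc ‖z ^ 3 - w ^ 2‖ ≤ ‖z ^ 3‖ + ‖w ^ 2‖ := norm_sub_le _ _
            _ ≤ 2 := by
              rw [norm_pow, norm_pow]
              nlinarith [pow_le_one₀ (norm_nonneg z) hz (n := 3),
                pow_le_one₀ (norm_nonneg w) hw (n := 2)]
        have : |eps| = eps := abs_of_pos heps
        nlinarith [norm_nonneg (z ^ 3 - w ^ 2)]
      rw [hx] at h2
      simp at h2
    refine ⟨?_, hden, ?_, ?_⟩
    · intro τ₁ τ₂ h1 h2
      have hτ1 : τ₁ ≠ 0 := by intro h; rw [h] at h1; simp at h1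
      have hτ2 : τ₂ ≠ 0 := by intro h; rw [h] at h2; simp at h2
      have hD : 1 + (eps : ℂ) * (τ₁ ^ 3 - τ₂ ^ 2) ≠ 0 :=
        hden τ₁ τ₂ h1.le h2.le
      have hc1 : (starRingEnd ℂ) τ₁ = τ₁⁻¹ := (Complex.inv_eq_conj h1).symm
      have hc2 : (starRingEnd ℂ) τ₂ = τ₂⁻¹ := (Complex.inv_eq_conj h2).symm
      have key : τ₁ ^ 3 * τ₂ ^ 2 - (eps : ℂ) * (τ₁ ^ 3 - τ₂ ^ 2)
          = τ₁ ^ 3 * τ₂ ^ 2 *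
            (starRingEnd ℂ) (1 + (eps : ℂ) * (τ₁ ^ 3 - τ₂ ^ 2)) := by
        simp only [map_add, map_one, map_mul, map_sub, map_pow,
          Complex.conj_ofReal, hc1, hc2]
        field_simp
        ring
      rw [key, mul_div_assoc, norm_mul, norm_mul, norm_pow, norm_pow, h1, h2,
        norm_div, RCLike.norm_conj, div_self (norm_ne_zero_iff.mpr hD)]
      norm_num
    · intro z w h
      rw [h, sub_self, mul_zero, sub_zero, add_zero, div_one]
    · intro z w hz hw hne hne1 heq
      have hD : 1 + (eps : ℂ) * (z ^ 3 - w ^ 2) ≠ 0 := hden z w hz.le hw.le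
      rw [div_eq_iff hD] at heq
      have hkey : (eps : ℂ) * (z ^ 3 - w ^ 2) * (1 + z ^ 3 * w ^ 2) = 0 := by
        linear_combination -heq
      rcases mul_eq_zero.mp hkey with h | h
      · rcases mul_eq_zero.mp h with h | h
        · exact (Complex.ofReal_ne_zero.mpr heps.ne') h
        · exact hne (sub_eq_zero.mp h)
      · exact hne1 (by linear_combination h)
end

section
/- Let $\epsilon \in (0, 1/2)$ and define on $\mathbb{D}^2$ the functions $F(z,w) = z^3 w^2$ and $F_\epsilon(z,w) = \dfrac{z^3w^2 - \epsilon(z^3 - w^2)}{1 + \epsilon(z^3 - w^2)}$. Then $F_\epsilon$ is holomorphic on $\mathbb{D}^2$, $\sup_{\mathbb{D}^2}|F_\epsilon| \leq 1$, and $F_\epsilon(\lambda) = F(\lambda)$ for every $\lambda$ in the Neil parabola intersected with $\mathbb{D}^2$. -/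
/-!
Write `a = z³`, `b = w²`; both lie in the unit disc, and `F_ε(z, w) = Φ(a, b)` with
`Φ(a, b) = (ab - ε(a - b)) / (1 + ε(a - b))`. The denominator cannot vanish since
`ε|a - b| < 2ε ≤ 1`. For the bound one compares squared moduli: with `x = |a|`, `y = |b|`,
`|1 + ε(a - b)|² - |ab - ε(a - b)|² = 1 - x²y² + 2ε((1 - y²) Re a - (1 - x²) Re b)`,
and `Re a ≥ -x`, `Re b ≤ y`, `2ε ≤ 1` reduce its nonnegativity to `(1 - x)(1 - y)(1 - xy) ≥ 0`.
On the Neil parabola `a = b`, so `Φ(a, b) = ab`.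
-/

open Complex

namespace NeilParabola

variable {ε : ℝ} {a b : ℂ}

lemma one_add_mul_sub_ne_zero (hε₀ : 0 ≤ ε) (hε : ε ≤ 1 / 2) (ha : ‖a‖ < 1) (hb : ‖b‖ < 1) :
    1 + (ε : ℂ) * (a - b) ≠ 0 := by
  have hsmall : ‖(ε : ℂ) * (a - b)‖ < 1 :=
    calc ‖(ε : ℂ) * (a - b)‖ ≤ ε * (‖a‖ + ‖b‖) := by
          rw [norm_mul, norm_real, Real.norm_of_nonneg hε₀]
          exact mul_le_mul_of_nonneg_left (norm_sub_le a b) hε₀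
      _ ≤ 1 / 2 * (‖a‖ + ‖b‖) := by gcongr
      _ < 1 := by linarith
  intro h
  rw [add_eq_zero_iff_eq_neg'.mp h, norm_neg, norm_one] at hsmall
  exact lt_irrefl 1 hsmall

lemma normSq_one_add_mul_sub_sub_normSq (ε : ℝ) (a b : ℂ) :
    normSq (1 + (ε : ℂ) * (a - b)) - normSq (a * b - (ε : ℂ) * (a - b)) =
      1 - normSq a * normSq b + 2 * ε * ((1 - normSq b) * a.re - (1 - normSq a) * b.re) := by
  simp only [normSq_apply, add_re, add_im, mul_re, mul_im, sub_re, sub_im, one_re, one_im,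
    ofReal_re, ofReal_im]
  ring

lemma norm_mul_sub_le_norm_one_add (hε₀ : 0 ≤ ε) (hε : ε ≤ 1 / 2) (ha : ‖a‖ ≤ 1)
    (hb : ‖b‖ ≤ 1) : ‖a * b - (ε : ℂ) * (a - b)‖ ≤ ‖1 + (ε : ℂ) * (a - b)‖ := by
  rw [← pow_le_pow_iff_left₀ (norm_nonneg _) (norm_nonneg _) two_ne_zero,
    ← normSq_eq_norm_sq, ← normSq_eq_norm_sq, ← sub_nonneg,
    normSq_one_add_mul_sub_sub_normSq, normSq_eq_norm_sq, normSq_eq_norm_sq]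
  set x := ‖a‖
  set y := ‖b‖
  have hx : 0 ≤ x := norm_nonneg a
  have hy : 0 ≤ y := norm_nonneg b
  have hre_a : -x ≤ a.re := (abs_le.mp (abs_re_le_norm a)).1
  have hre_b : b.re ≤ y := (abs_le.mp (abs_re_le_norm b)).2
  have hcubic : 0 ≤ (1 - x) * (1 - y) * (1 - x * y) := by
    have : x * y ≤ 1 := mul_le_one₀ ha hy hb
    apply mul_nonneg (mul_nonneg _ _) <;> linarith
  have hx2 : 0 ≤ 1 - x ^ 2 := by nlinarith
  have hy2 : 0 ≤ 1 - y ^ 2 := by nlinarith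
  have hre : (1 - y ^ 2) * (-x) - (1 - x ^ 2) * y ≤ (1 - y ^ 2) * a.re - (1 - x ^ 2) * b.re := by
    gcongr
  nlinarith [mul_nonneg hy2 hx, mul_nonneg hx2 hy]

end NeilParabola

open NeilParabola in
/-- For `0 < ε < 1/2`, the rational inner perturbation
`F_ε(z,w) = (z³w² - ε(z³-w²)) / (1 + ε(z³-w²))` is holomorphic on the bidisc, is bounded by
one there, and agrees with `F(z,w) = z³w²` on the Neil parabola intersected with the bidisc. -/
theorem stmt14 (eps : ℝ) (h0 : 0 < eps) (h2 : eps < 1 / 2) :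
    DifferentiableOn ℂ
      (fun p : ℂ × ℂ =>
        (p.1 ^ 3 * p.2 ^ 2 - (eps : ℂ) * (p.1 ^ 3 - p.2 ^ 2)) /
          (1 + (eps : ℂ) * (p.1 ^ 3 - p.2 ^ 2)))
      {p : ℂ × ℂ | ‖p.1‖ < 1 ∧ ‖p.2‖ < 1} ∧
    (∀ p : ℂ × ℂ, ‖p.1‖ < 1 → ‖p.2‖ < 1 →
      ‖(p.1 ^ 3 * p.2 ^ 2 - (eps : ℂ) * (p.1 ^ 3 - p.2 ^ 2)) /
          (1 + (eps : ℂ) * (p.1 ^ 3 - p.2 ^ 2))‖ ≤ 1) ∧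
    (∀ p : ℂ × ℂ, ‖p.1‖ < 1 → ‖p.2‖ < 1 → p.1 ^ 3 = p.2 ^ 2 →
      (p.1 ^ 3 * p.2 ^ 2 - (eps : ℂ) * (p.1 ^ 3 - p.2 ^ 2)) /
          (1 + (eps : ℂ) * (p.1 ^ 3 - p.2 ^ 2)) = p.1 ^ 3 * p.2 ^ 2) := by
  have hpow : ∀ (z : ℂ) (n : ℕ), ‖z‖ < 1 → n ≠ 0 → ‖z ^ n‖ < 1 := fun z n hz hn => by
    rw [norm_pow]; exact pow_lt_one₀ (norm_nonneg z) hz hn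
  refine ⟨?_, fun p hz hw => ?_, fun p _ _ hp => by simp [hp]⟩
  · have hden : ∀ p ∈ {p : ℂ × ℂ | ‖p.1‖ < 1 ∧ ‖p.2‖ < 1},
        1 + (eps : ℂ) * (p.1 ^ 3 - p.2 ^ 2) ≠ 0 := fun p hp =>
      one_add_mul_sub_ne_zero h0.le h2.le (hpow _ 3 hp.1 three_ne_zero)
        (hpow _ 2 hp.2 two_ne_zero)
    simp only [div_eq_mul_inv]
    fun_prop (disch := assumption)
  · rw [norm_div]
    exact div_le_one_of_le₀ (norm_mul_sub_le_norm_one_add h0.le h2.le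
      (hpow _ 3 hz three_ne_zero).le (hpow _ 2 hw two_ne_zero).le) (norm_nonneg _)
end
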